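/- arXiv:2306.12332 — 3 statements merged into one kernel-verified Lean document; each statement's English description precedes it below -/
import Mathlib

section
/- With the notation of the previous statement (negative psh functions $u_1,\dots,u_m$, point $x_0$ with finite values, $E_\delta$ as above, $c_r=\mathrm{Leb}(B(x_0,r))$), for every negative plurisubharmonic $u'$ with $u'(x_0)>-\infty$ one has $c_r^{-1}\int_{B(x_0,r)\setminus E_\delta} u'\,d\mathrm{Leb}\to u'(x_0)$ as $r\to 0$. -/
open MeasureTheory Metric Filter
open scoped ENNReal Topology

noncomputable section

/-- `ℂ^k` with its Euclidean structure. -/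
abbrev Ck (k : ℕ) := EuclideanSpace ℂ (Fin k)

instance (k : ℕ) : MeasurableSpace (Ck k) := borel _
instance (k : ℕ) : BorelSpace (Ck k) := ⟨rfl⟩

/-- A plurisubharmonic function on an open set `U ⊆ ℂ^k`, with values in `ℝ ∪ {-∞}`
(modeled as `EReal`): upper semicontinuous, nowhere `+∞`, locally integrable with `-∞` locus
Lebesgue-negligible, and satisfying the sub-mean value inequality on closed balls. -/
structure IsPSH {k : ℕ} (U : Set (Ck k)) (u : Ck k → EReal) : Prop where
  ne_top : ∀ x ∈ U, u x ≠ ⊤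
  bot_null : volume {x ∈ U | u x = ⊥} = 0
  loc_int : LocallyIntegrableOn (fun y => (u y).toReal) U volume
  usc : UpperSemicontinuousOn u U
  submean : ∀ x ∈ U, ∀ r > 0, closedBall x r ⊆ U →
    u x ≤ ((⨍ y in closedBall x r, (u y).toReal ∂volume : ℝ) : EReal)

/-! Near `x₀` a psh function `v` finite at `x₀` is squeezed in the mean: upper
semicontinuity gives `v ≤ v x₀ + ε` on small balls, and the sub-mean value property gives
`v x₀ ≤ ⨍_{B(x₀,r)} v`. Together these force `⨍_{B(x₀,r)} |v - v x₀| → 0`. By Chebyshev, each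
`{|u_j - u_j x₀| ≥ δ}` then occupies a vanishing fraction of `B(x₀,r)`, and cutting a set of
vanishing relative measure out of the ball does not change the limit of the averages of `u'`,
whose own mean oscillation vanishes. -/

section LocalMeans

variable {ι X : Type*} [MeasurableSpace X] {μ : Measure X} {l : Filter ι} {s : ι → Set X}
  {f : X → ℝ} {c : ℝ}

theorem setIntegral_div_measureReal_le {s : Set X} {C : ℝ} (hs : 0 < μ.real s)
    (hf : IntegrableOn f s μ) (hC : ∀ᵐ y ∂μ.restrict s, f y ≤ C) :
    (∫ y in s, f y ∂μ) / μ.real s ≤ C := by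
  have hfin : μ s ≠ ∞ := (ENNReal.toReal_pos_iff.1 hs).2.ne
  rw [div_le_iff₀ hs]
  calc ∫ y in s, f y ∂μ ≤ ∫ _ in s, C ∂μ :=
        setIntegral_mono_ae_restrict hf (integrableOn_const hfin) hC
    _ = C * μ.real s := by rw [setIntegral_const, smul_eq_mul, mul_comm]

theorem tendsto_setIntegral_abs_sub_div_of_le (hs : ∀ᶠ i in l, 0 < μ.real (s i))
    (hf : ∀ᶠ i in l, IntegrableOn f (s i) μ)
    (hmean : Tendsto (fun i => (∫ y in s i, f y ∂μ) / μ.real (s i)) l (𝓝 c))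
    (hle : ∀ ε > 0, ∀ᶠ i in l, ∀ᵐ y ∂μ.restrict (s i), f y ≤ c + ε) :
    Tendsto (fun i => (∫ y in s i, |f y - c| ∂μ) / μ.real (s i)) l (𝓝 0) := by
  refine tendsto_order.2 ⟨fun a ha => ?_, fun a ha => ?_⟩
  · filter_upwards [hs] with i hi
    exact ha.trans_le (div_nonneg (integral_nonneg fun _ => abs_nonneg _) hi.le)
  · obtain ⟨ε, hε, hεa⟩ : ∃ ε > 0, 2 * ε < a := ⟨a / 3, by positivity, by linarith⟩
    have hlim : Tendsto (fun i => c + 2 * ε - (∫ y in s i, f y ∂μ) / μ.real (s i)) l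
        (𝓝 (2 * ε)) := by
      simpa using (tendsto_const_nhds (x := c + 2 * ε)).sub hmean
    filter_upwards [hs, hf, hle ε hε, hlim.eventually (gt_mem_nhds hεa)]
      with i hμ hfi hfle hlt
    have hfin : μ (s i) ≠ ∞ := (ENNReal.toReal_pos_iff.1 hμ).2.ne
    have hbound : ∫ y in s i, |f y - c| ∂μ ≤ ∫ y in s i, (c + 2 * ε - f y) ∂μ := by
      refine setIntegral_mono_ae_restrict (hfi.sub (integrableOn_const hfin)).abs
        ((integrableOn_const hfin).sub hfi) (hfle.mono fun y hy => ?_)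
      exact abs_le.2 ⟨by linarith, by linarith⟩
    rw [integral_sub (integrableOn_const (C := c + 2 * ε) hfin) hfi, setIntegral_const,
      smul_eq_mul] at hbound
    calc (∫ y in s i, |f y - c| ∂μ) / μ.real (s i)
        ≤ (μ.real (s i) * (c + 2 * ε) - ∫ y in s i, f y ∂μ) / μ.real (s i) := by gcongr
      _ = c + 2 * ε - (∫ y in s i, f y ∂μ) / μ.real (s i) := by field_simp
      _ < a := hlt

theorem tendsto_measureReal_inter_div_of_le_abs_sub {t : Set X} {δ : ℝ} (hδ : 0 < δ)
    (hs : ∀ᶠ i in l, 0 < μ.real (s i)) (hf : ∀ᶠ i in l, IntegrableOn f (s i) μ)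
    (ht : ∀ᶠ i in l, ∀ᵐ y ∂μ.restrict (s i), y ∈ t → δ ≤ |f y - c|)
    (hosc : Tendsto (fun i => (∫ y in s i, |f y - c| ∂μ) / μ.real (s i)) l (𝓝 0)) :
    Tendsto (fun i => μ.real (s i ∩ t) / μ.real (s i)) l (𝓝 0) := by
  refine squeeze_zero' (Eventually.of_forall fun i => by positivity) ?_
    (by simpa using hosc.const_mul δ⁻¹)
  filter_upwards [hs, hf, ht] with i hμ hfi hti
  have hfin : μ (s i) ≠ ∞ := (ENNReal.toReal_pos_iff.1 hμ).2.ne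
  have : Fact (μ (s i) < ∞) := ⟨hfin.lt_top⟩
  have hsub : μ.real (s i ∩ t) ≤ (μ.restrict (s i)).real {y | δ ≤ |f y - c|} := by
    refine ENNReal.toReal_mono (measure_ne_top _ _) ?_
    rw [Set.inter_comm]
    exact (Measure.le_restrict_apply _ _).trans (measure_mono_ae (hti.mono fun y hy => hy))
  have hmarkov := mul_meas_ge_le_integral_of_nonneg (ae_of_all _ fun y => abs_nonneg (f y - c))
    (hfi.sub (integrableOn_const hfin)).abs δ
  rw [← mul_div_assoc, div_le_div_iff_of_pos_right hμ, le_inv_mul_iff₀ hδ]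
  linarith [mul_le_mul_of_nonneg_left hsub hδ.le]

theorem tendsto_measureReal_inter_iUnion_div {κ : Type*} [Fintype κ] {t : κ → Set X}
    (ht : ∀ j, Tendsto (fun i => μ.real (s i ∩ t j) / μ.real (s i)) l (𝓝 0)) :
    Tendsto (fun i => μ.real (s i ∩ ⋃ j, t j) / μ.real (s i)) l (𝓝 0) := by
  refine squeeze_zero (fun i => by positivity) (fun i => ?_)
    (by simpa using tendsto_finsetSum Finset.univ fun j _ => ht j)
  rw [← Finset.sum_div, Set.inter_iUnion]
  exact div_le_div_of_nonneg_right (measureReal_iUnion_fintype_le _) measureReal_nonneg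

theorem tendsto_setIntegral_sdiff_div {t : Set X} (hs : ∀ᶠ i in l, 0 < μ.real (s i))
    (hf : ∀ᶠ i in l, IntegrableOn f (s i) μ) (ht : ∀ᶠ i in l, MeasurableSet (s i ∩ t))
    (hosc : Tendsto (fun i => (∫ y in s i, |f y - c| ∂μ) / μ.real (s i)) l (𝓝 0))
    (hdens : Tendsto (fun i => μ.real (s i ∩ t) / μ.real (s i)) l (𝓝 0)) :
    Tendsto (fun i => (∫ y in s i \ t, f y ∂μ) / μ.real (s i)) l (𝓝 c) := by
  rw [tendsto_iff_norm_sub_tendsto_zero]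
  refine squeeze_zero' (Eventually.of_forall fun i => norm_nonneg _) ?_
    (by simpa using hosc.add (hdens.const_mul |c|))
  filter_upwards [hs, hf, ht] with i hμ hfi hti
  have hfin : μ (s i) ≠ ∞ := (ENNReal.toReal_pos_iff.1 hμ).2.ne
  have hfc : IntegrableOn (fun y => f y - c) (s i) μ := hfi.sub (integrableOn_const hfin)
  have hsdiff : s i \ t = s i \ (s i ∩ t) := Set.sdiff_self_inter.symm
  have hsplit : ∫ y in s i \ t, f y ∂μ
      = ∫ y in s i \ t, (f y - c) ∂μ + c * (μ.real (s i) - μ.real (s i ∩ t)) := by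
    rw [integral_sub (hfi.mono_set Set.sdiff_subset)
        ((integrableOn_const hfin).mono_set Set.sdiff_subset), setIntegral_const, smul_eq_mul,
      hsdiff, measureReal_sdiff Set.inter_subset_left hti]
    ring
  have habs : |∫ y in s i \ t, (f y - c) ∂μ| ≤ ∫ y in s i, |f y - c| ∂μ :=
    (abs_integral_le_integral_abs).trans (setIntegral_mono_set hfc.abs
      (ae_of_all _ fun _ => abs_nonneg _) Set.sdiff_subset.eventuallyLE)
  have hrw : (∫ y in s i \ t, f y ∂μ) / μ.real (s i) - c
      = (∫ y in s i \ t, (f y - c) ∂μ) / μ.real (s i)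
          - c * (μ.real (s i ∩ t) / μ.real (s i)) := by
    rw [hsplit]; field_simp; ring
  rw [Real.norm_eq_abs, hrw]
  refine (abs_sub _ _).trans (add_le_add ?_ ?_)
  · rw [abs_div, abs_of_pos hμ]
    exact div_le_div_of_nonneg_right habs hμ.le
  · rw [abs_mul, abs_of_nonneg (div_nonneg measureReal_nonneg hμ.le)]

end LocalMeans

theorem eventually_measureReal_ball_pos {X : Type*} [PseudoMetricSpace X] [ProperSpace X]
    [MeasurableSpace X] [OpensMeasurableSpace X] (μ : Measure X) [μ.IsOpenPosMeasure]
    [IsFiniteMeasureOnCompacts μ] (x : X) : ∀ᶠ r in 𝓝[>] (0 : ℝ), 0 < μ.real (ball x r) :=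
  eventually_mem_nhdsWithin.mono fun _ hr =>
    ENNReal.toReal_pos (measure_ball_pos μ x hr).ne' measure_ball_lt_top.ne

theorem UpperSemicontinuousOn.measurableSet_inter_preimage {X α : Type*} [TopologicalSpace X]
    [MeasurableSpace X] [OpensMeasurableSpace X] [TopologicalSpace α] [MeasurableSpace α]
    [BorelSpace α] [LinearOrder α] [OrderTopology α] [SecondCountableTopology α]
    {U : Set X} {u : X → α} (hu : UpperSemicontinuousOn u U) (hU : IsOpen U) {S : Set α}
    (hS : MeasurableSet S) : MeasurableSet (U ∩ u ⁻¹' S) := by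
  have hm : Measurable (U.domRestrict u) := (upperSemicontinuousOn_iff_restrict.2 hu).measurable
  convert hU.measurableSet.subtype_image (hm hS) using 1
  ext x
  simp [Set.domRestrict, and_comm]

def deviationSet {X : Type*} (u : X → EReal) (x0 : X) (δ : ℝ) : Set X :=
  {x | (δ : EReal) ≤ max (u x - u x0) (u x0 - u x)}

theorem EReal.le_abs_toReal_sub_of_le_max {a b : EReal} {δ : ℝ} (ha : a ≠ ⊤) (ha' : a ≠ ⊥)
    (hb : b ≠ ⊤) (hb' : b ≠ ⊥) (h : (δ : EReal) ≤ max (a - b) (b - a)) :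
    δ ≤ |a.toReal - b.toReal| := by
  lift a to ℝ using ⟨ha, ha'⟩
  lift b to ℝ using ⟨hb, hb'⟩
  rw [← EReal.coe_sub, ← EReal.coe_sub, le_max_iff, EReal.coe_le_coe_iff,
    EReal.coe_le_coe_iff] at h
  simpa [le_abs, neg_sub] using h

namespace IsPSH

variable {k : ℕ} {U : Set (Ck k)} {u : Ck k → EReal} {x0 : Ck k}

theorem ae_restrict_ne_bot_ne_top (hu : IsPSH U u) (hU : MeasurableSet U) :
    ∀ᵐ y ∂volume.restrict U, u y ≠ ⊥ ∧ u y ≠ ⊤ := by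
  rw [ae_restrict_iff' hU]
  filter_upwards [measure_eq_zero_iff_ae_notMem.1 hu.bot_null] with y hy hyU
  exact ⟨fun hbot => hy ⟨hyU, hbot⟩, hu.ne_top y hyU⟩

theorem measurableSet_inter_deviationSet (hu : IsPSH U u) (hU : IsOpen U) (x0 : Ck k) (δ : ℝ) :
    MeasurableSet (U ∩ deviationSet u x0 δ) :=
  hu.usc.measurableSet_inter_preimage hU (S := {t | (δ : EReal) ≤ max (t - u x0) (u x0 - t)})
    (measurableSet_le measurable_const
      ((measurable_id.sub_const _).max (measurable_const.sub measurable_id)))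

theorem eventually_integrableOn_ball (hu : IsPSH U u) (hU : IsOpen U) (hx0 : x0 ∈ U) :
    ∀ᶠ r in 𝓝[>] (0 : ℝ), IntegrableOn (fun y => (u y).toReal) (ball x0 r) := by
  filter_upwards [nhdsWithin_le_nhds (eventually_closedBall_subset (hU.mem_nhds hx0))] with r hr
  exact (hu.loc_int.integrableOn_compact_subset hr (isCompact_closedBall x0 r)).mono_set
    ball_subset_closedBall

theorem eventually_ae_toReal_le (hu : IsPSH U u) (hU : IsOpen U) (hx0 : x0 ∈ U)
    (hfin : u x0 ≠ ⊥) {ε : ℝ} (hε : 0 < ε) :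
    ∀ᶠ r in 𝓝[>] (0 : ℝ), ∀ᵐ y ∂volume.restrict (ball x0 r),
      (u y).toReal ≤ (u x0).toReal + ε := by
  have hlt : u x0 < ((u x0).toReal + ε : ℝ) := by
    lift u x0 to ℝ using ⟨hu.ne_top x0 hx0, hfin⟩ with c
    exact_mod_cast lt_add_of_pos_right c hε
  have hnhds : {y | y ∈ U ∧ u y < ((u x0).toReal + ε : ℝ)} ∈ 𝓝 x0 := by
    have := hu.usc x0 hx0 _ hlt
    rw [nhdsWithin_eq_nhds.2 (hU.mem_nhds hx0)] at this
    exact Filter.inter_mem (hU.mem_nhds hx0) this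
  filter_upwards [nhdsWithin_le_nhds (eventually_ball_subset hnhds)] with r hr
  filter_upwards [ae_restrict_mem measurableSet_ball, ae_restrict_of_ae_restrict_of_subset
    (hr.trans Set.inter_subset_left) (hu.ae_restrict_ne_bot_ne_top hU.measurableSet)] with y hyr hy
  simpa only [EReal.toReal_coe] using EReal.toReal_le_toReal (hr hyr).2.le hy.1 (EReal.coe_ne_top _)

theorem eventually_ae_le_abs_toReal_sub (hu : IsPSH U u) (hU : IsOpen U) (hx0 : x0 ∈ U)
    (hfin : u x0 ≠ ⊥) (δ : ℝ) : ∀ᶠ r in 𝓝[>] (0 : ℝ), ∀ᵐ y ∂volume.restrict (ball x0 r),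
      y ∈ deviationSet u x0 δ → δ ≤ |(u y).toReal - (u x0).toReal| := by
  filter_upwards [nhdsWithin_le_nhds (eventually_ball_subset (hU.mem_nhds hx0))] with r hr
  filter_upwards [ae_restrict_of_ae_restrict_of_subset hr
    (hu.ae_restrict_ne_bot_ne_top hU.measurableSet)] with y hy hyE
  exact EReal.le_abs_toReal_sub_of_le_max hy.2 hy.1 (hu.ne_top x0 hx0) hfin hyE

theorem toReal_le_setIntegral_ball_div (hu : IsPSH U u) (hx0 : x0 ∈ U) (hfin : u x0 ≠ ⊥)
    {r : ℝ} (hr : 0 < r) (hrU : closedBall x0 r ⊆ U) :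
    (u x0).toReal ≤ (∫ y in ball x0 r, (u y).toReal) / volume.real (ball x0 r) := by
  have hball : ball x0 r =ᵐ[volume] closedBall x0 r := by
    refine ae_eq_set.2 ⟨by simp [Set.sdiff_eq_empty.2 ball_subset_closedBall], ?_⟩
    rw [closedBall_sdiff_ball]
    exact Measure.addHaar_sphere_of_ne_zero _ _ hr.ne'
  have h := EReal.toReal_le_toReal (hu.submean x0 hx0 r hr hrU) hfin (EReal.coe_ne_top _)
  rwa [EReal.toReal_coe, ← setAverage_congr hball, setAverage_eq, smul_eq_mul,
    ← div_eq_inv_mul] at h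

theorem tendsto_setIntegral_ball_div (hu : IsPSH U u) (hU : IsOpen U) (hx0 : x0 ∈ U)
    (hfin : u x0 ≠ ⊥) :
    Tendsto (fun r => (∫ y in ball x0 r, (u y).toReal) / volume.real (ball x0 r)) (𝓝[>] 0)
      (𝓝 (u x0).toReal) := by
  refine tendsto_order.2 ⟨fun a ha => ?_, fun a ha => ?_⟩
  · filter_upwards [eventually_mem_nhdsWithin,
      nhdsWithin_le_nhds (eventually_closedBall_subset (hU.mem_nhds hx0))] with r hr hrU
    exact ha.trans_le (hu.toReal_le_setIntegral_ball_div hx0 hfin hr hrU)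
  · obtain ⟨ε, hε, hεa⟩ : ∃ ε > 0, (u x0).toReal + ε < a :=
      ⟨(a - (u x0).toReal) / 2, by linarith, by linarith⟩
    filter_upwards [eventually_measureReal_ball_pos volume x0,
      hu.eventually_integrableOn_ball hU hx0,
      hu.eventually_ae_toReal_le hU hx0 hfin hε] with r hμ hint hle
    exact (setIntegral_div_measureReal_le hμ hint hle).trans_lt hεa

theorem tendsto_setIntegral_abs_sub_ball_div (hu : IsPSH U u) (hU : IsOpen U) (hx0 : x0 ∈ U)
    (hfin : u x0 ≠ ⊥) :
    Tendsto (fun r => (∫ y in ball x0 r, |(u y).toReal - (u x0).toReal|) /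
      volume.real (ball x0 r)) (𝓝[>] 0) (𝓝 0) :=
  tendsto_setIntegral_abs_sub_div_of_le (eventually_measureReal_ball_pos volume x0)
    (hu.eventually_integrableOn_ball hU hx0) (hu.tendsto_setIntegral_ball_div hU hx0 hfin)
    fun _ hε => hu.eventually_ae_toReal_le hU hx0 hfin hε

end IsPSH

theorem stmt2_general (k m : ℕ) (u : Fin m → Ck k → EReal)
    (hu : ∀ j, IsPSH (ball (0 : Ck k) 1) (u j))
    (x0 : Ck k) (hx0 : x0 ∈ ball (0 : Ck k) 1) (hfin : ∀ j, u j x0 ≠ ⊥)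
    (δ : ℝ) (hδ : 0 < δ)
    (u' : Ck k → EReal) (hu' : IsPSH (ball (0 : Ck k) 1) u')
    (hfin' : u' x0 ≠ ⊥) :
    Tendsto (fun r : ℝ =>
        (∫ y in ball x0 r \
            (⋃ j, {x | (δ : EReal) ≤ max (u j x - u j x0) (u j x0 - u j x)}),
          (u' y).toReal ∂volume) / (volume (ball x0 r)).toReal)
      (𝓝[>] 0) (𝓝 ((u' x0).toReal)) := by
  have hU : IsOpen (ball (0 : Ck k) 1) := isOpen_ball
  have hdens : ∀ j, Tendsto (fun r => volume.real (ball x0 r ∩ deviationSet (u j) x0 δ) /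
      volume.real (ball x0 r)) (𝓝[>] 0) (𝓝 0) := fun j =>
    tendsto_measureReal_inter_div_of_le_abs_sub hδ (eventually_measureReal_ball_pos volume x0)
      ((hu j).eventually_integrableOn_ball hU hx0)
      ((hu j).eventually_ae_le_abs_toReal_sub hU hx0 (hfin j) δ)
      ((hu j).tendsto_setIntegral_abs_sub_ball_div hU hx0 (hfin j))
  have hmeas : ∀ᶠ r in 𝓝[>] (0 : ℝ),
      MeasurableSet (ball x0 r ∩ ⋃ j, deviationSet (u j) x0 δ) := by
    filter_upwards [nhdsWithin_le_nhds (eventually_ball_subset (hU.mem_nhds hx0))] with r hr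
    rw [← Set.inter_eq_left.2 hr, Set.inter_assoc, Set.inter_iUnion]
    exact measurableSet_ball.inter
      (.iUnion fun j => (hu j).measurableSet_inter_deviationSet hU x0 δ)
  exact tendsto_setIntegral_sdiff_div (eventually_measureReal_ball_pos volume x0)
    (hu'.eventually_integrableOn_ball hU hx0) hmeas
    (hu'.tendsto_setIntegral_abs_sub_ball_div hU hx0 hfin')
    (tendsto_measureReal_inter_iUnion_div hdens)

/-- with `E_δ = ⋃ⱼ {|uⱼ - uⱼ(x₀)| ≥ δ}` for negative psh `uⱼ` finite at `x₀`,
one has `c_r⁻¹ ∫_{B(x₀,r) \ E_δ} u' dLeb → u'(x₀)` for every negative psh `u'` finite at `x₀`. -/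
theorem stmt2 (k m : ℕ) (u : Fin m → Ck k → EReal)
    (hu : ∀ j, IsPSH (ball (0 : Ck k) 1) (u j))
    (hneg : ∀ j, ∀ x ∈ ball (0 : Ck k) 1, u j x ≤ 0)
    (x0 : Ck k) (hx0 : x0 ∈ ball (0 : Ck k) 1) (hfin : ∀ j, u j x0 ≠ ⊥)
    (δ : ℝ) (hδ : 0 < δ)
    (u' : Ck k → EReal) (hu' : IsPSH (ball (0 : Ck k) 1) u')
    (hneg' : ∀ x ∈ ball (0 : Ck k) 1, u' x ≤ 0) (hfin' : u' x0 ≠ ⊥) :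
    Tendsto (fun r : ℝ =>
        (∫ y in ball x0 r \
            (⋃ j, {x | (δ : EReal) ≤ max (u j x - u j x0) (u j x0 - u j x)}),
          (u' y).toReal ∂volume) / (volume (ball x0 r)).toReal)
      (𝓝[>] 0) (𝓝 ((u' x0).toReal)) :=
  stmt2_general k m u hu x0 hx0 hfin δ hδ u' hu' hfin'
end
end

section
/- Let $x_0\in\mathbb{B}\subset\mathbb{C}^k$, let $u_1,\dots,u_m$ be bounded plurisubharmonic functions on $\mathbb{B}$, $\delta>0$, and set $V:=\bigcap_{j=1}^m\{x:|u_j(x)-u_j(x_0)|<\delta\}$. Let $u$ be a plurisubharmonic function on $\mathbb{B}$ with $u(x_0)>-\infty$ and $u\le 0$, and $c_r:=\mathrm{Leb}(B(x_0,r))$. Then $c_r^{-1}\int_{B(x_0,r)\setminus V}|u|\,d\mathrm{Leb}\to 0$ as $r\to 0$. -/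
open MeasureTheory Metric Filter
open scoped ENNReal Topology

noncomputable section

/-!
Every point where a psh function `w` is finite is a Lebesgue point of `w`: near `x₀`, upper
semicontinuity gives `w ≤ w(x₀) + η`, while the sub-mean value inequality says that the mean of `w`
over `B(x₀, r)` is at least `w(x₀)`; together they bound the mean of `|w - w(x₀)|` by `2η`.
For the `v_j` this shows, via Chebyshev's inequality, that `B(x₀, r) \ V` occupies a vanishing
proportion of the ball; for `u` it bounds the normalized integral of `|u| ≤ |u - u(x₀)| + |u(x₀)|`
over `B(x₀, r) \ V`.
-/

section

variable {α : Type*} [MeasurableSpace α] {μ : Measure α} {s : Set α}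

theorem measureReal_diff_setOf_forall_abs_lt_le {ι : Type*} [Fintype ι] (hs : MeasurableSet s)
    (hμs : μ s ≠ ∞) {f : ι → α → ℝ} (hf : ∀ i, IntegrableOn (f i) s μ) {δ : ℝ} (hδ : 0 < δ) :
    μ.real (s \ {x | ∀ i, |f i x| < δ}) ≤ δ⁻¹ * ∑ i, ∫ x in s, |f i x| ∂μ := by
  have hcover : s \ {x | ∀ i, |f i x| < δ} ⊆ ⋃ i, {x | δ ≤ |f i x|} ∩ s := by
    rintro x ⟨hxs, hx⟩
    obtain ⟨i, hi⟩ : ∃ i, δ ≤ |f i x| := by simpa using hx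
    exact Set.mem_iUnion.2 ⟨i, hi, hxs⟩
  have hmarkov : ∀ i, μ.real ({x | δ ≤ |f i x|} ∩ s) ≤ δ⁻¹ * ∫ x in s, |f i x| ∂μ := by
    intro i
    rw [le_inv_mul_iff₀ hδ, ← measureReal_restrict_apply' hs]
    exact mul_meas_ge_le_integral_of_nonneg (ae_of_all _ fun x => abs_nonneg _) (hf i).abs δ
  calc μ.real (s \ {x | ∀ i, |f i x| < δ})
      ≤ μ.real (⋃ i, {x | δ ≤ |f i x|} ∩ s) :=
        measureReal_mono hcover <| ne_top_of_le_ne_top hμs <|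
          measure_mono (Set.iUnion_subset fun _ => Set.inter_subset_right)
    _ ≤ ∑ i, μ.real ({x | δ ≤ |f i x|} ∩ s) := measureReal_iUnion_fintype_le _
    _ ≤ ∑ i, δ⁻¹ * ∫ x in s, |f i x| ∂μ := Finset.sum_le_sum fun i _ => hmarkov i
    _ = δ⁻¹ * ∑ i, ∫ x in s, |f i x| ∂μ := (Finset.mul_sum _ _ _).symm

theorem setIntegral_abs_le_setIntegral_abs_sub_add {t : Set α} (hts : t ⊆ s) (hμs : μ s ≠ ∞)
    {f : α → ℝ} (hf : IntegrableOn f s μ) (a : ℝ) :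
    ∫ x in t, |f x| ∂μ ≤ ∫ x in s, |f x - a| ∂μ + |a| * μ.real t := by
  have hμt : μ t ≠ ∞ := ne_top_of_le_ne_top hμs (measure_mono hts)
  have hfa : IntegrableOn (fun x => |f x - a|) s μ := (hf.sub (integrableOn_const hμs)).abs
  calc ∫ x in t, |f x| ∂μ ≤ ∫ x in t, (|f x - a| + |a|) ∂μ :=
        setIntegral_mono (hf.mono_set hts).abs ((hfa.mono_set hts).add (integrableOn_const hμt))
          fun x => by simpa using abs_add_le (f x - a) a
    _ = ∫ x in t, |f x - a| ∂μ + |a| * μ.real t := by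
        rw [integral_add (hfa.mono_set hts) (integrableOn_const hμt), setIntegral_const,
          smul_eq_mul, mul_comm]
    _ ≤ ∫ x in s, |f x - a| ∂μ + |a| * μ.real t := by
        gcongr
        exact ae_of_all _ fun _ => abs_nonneg _

theorem setIntegral_abs_sub_le_of_mul_le_setIntegral (hμs : μ s ≠ ∞) {f : α → ℝ}
    (hf : IntegrableOn f s μ) {a η : ℝ} (hη : 0 ≤ η) (hmean : a * μ.real s ≤ ∫ x in s, f x ∂μ)
    (hle : ∀ᵐ x ∂μ.restrict s, f x ≤ a + η) :
    ∫ x in s, |f x - a| ∂μ ≤ 2 * η * μ.real s := by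
  have hconst : ∀ c : ℝ, IntegrableOn (fun _ => c) s μ := fun c => integrableOn_const hμs
  calc ∫ x in s, |f x - a| ∂μ ≤ ∫ x in s, (2 * η + a - f x) ∂μ := by
        refine integral_mono_ae (hf.sub (hconst a)).abs ((hconst _).sub hf) ?_
        filter_upwards [hle] with x hx
        rw [abs_le']
        constructor <;> linarith
    _ = 2 * η * μ.real s + (a * μ.real s - ∫ x in s, f x ∂μ) := by
        rw [integral_sub (hconst _) hf, setIntegral_const, smul_eq_mul]
        ring
    _ ≤ 2 * η * μ.real s := by linarith

end

theorem ball_ae_eq_closedBall {E : Type*} [NormedAddCommGroup E] [NormedSpace ℝ E]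
    [MeasurableSpace E] [BorelSpace E] [FiniteDimensional ℝ E] (μ : Measure E)
    [μ.IsAddHaarMeasure] (x : E) {r : ℝ} (hr : r ≠ 0) : ball x r =ᵐ[μ] closedBall x r :=
  ae_eq_set.2 ⟨by simp [Set.sdiff_eq_empty.2 ball_subset_closedBall],
    by rw [closedBall_sdiff_ball]; exact Measure.addHaar_sphere_of_ne_zero μ x hr⟩

namespace IsPSH

variable {k : ℕ} {U : Set (Ck k)} {w : Ck k → EReal} {x : Ck k} {r : ℝ}

theorem integrableOn_ball (hw : IsPSH U w) (h : closedBall x r ⊆ U) :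
    IntegrableOn (fun y => (w y).toReal) (ball x r) :=
  (hw.loc_int.integrableOn_compact_subset h (isCompact_closedBall x r)).mono_set
    ball_subset_closedBall

theorem toReal_mul_le_setIntegral_ball (hw : IsPSH U w) (hx : x ∈ U) (hwx : w x ≠ ⊥)
    (hr : 0 < r) (h : closedBall x r ⊆ U) :
    (w x).toReal * volume.real (ball x r) ≤ ∫ y in ball x r, (w y).toReal := by
  have hc : 0 < volume.real (ball x r) :=
    ENNReal.toReal_pos (measure_ball_pos volume x hr).ne' measure_ball_lt_top.ne
  have hmean := hw.submean x hx r hr h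
  rw [← EReal.coe_toReal (hw.ne_top x hx) hwx, EReal.coe_le_coe_iff,
    ← setAverage_congr (ball_ae_eq_closedBall volume x hr.ne'), setAverage_eq,
    smul_eq_mul] at hmean
  rw [mul_comm]
  exact (le_inv_mul_iff₀ hc).1 hmean

theorem eventually_ae_toReal_le_s9 (hw : IsPSH U w) (hU : IsOpen U) (hx : x ∈ U) {b : ℝ}
    (hb : w x < b) :
    ∀ᶠ r in 𝓝[>] 0, ∀ᵐ y ∂volume.restrict (ball x r), (w y).toReal ≤ b := by
  have hlt : {y | w y < b} ∈ 𝓝 x := hU.nhdsWithin_eq hx ▸ hw.usc x hx b hb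
  have hbot : ∀ᵐ y, ¬(y ∈ U ∧ w y = ⊥) := measure_eq_zero_iff_ae_notMem.1 hw.bot_null
  filter_upwards [nhdsWithin_le_nhds (eventually_ball_subset (inter_mem hlt (hU.mem_nhds hx)))]
    with r hr
  filter_upwards [ae_restrict_mem measurableSet_ball, ae_restrict_of_ae hbot] with y hy hy_bot
  obtain ⟨hwy, hyU⟩ := hr hy
  simpa using EReal.toReal_le_toReal hwy.le (fun h => hy_bot ⟨hyU, h⟩) (EReal.coe_ne_top b)

theorem tendsto_setIntegral_abs_sub_div (hw : IsPSH U w) (hU : IsOpen U) (hx : x ∈ U)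
    (hwx : w x ≠ ⊥) :
    Tendsto (fun r => (∫ y in ball x r, |(w y).toReal - (w x).toReal|) / volume.real (ball x r))
      (𝓝[>] 0) (𝓝 0) := by
  refine tendsto_order.2 ⟨fun b hb => Eventually.of_forall fun r => hb.trans_le ?_,
    fun b hb => ?_⟩
  · exact div_nonneg (integral_nonneg fun _ => abs_nonneg _) measureReal_nonneg
  have hlt : w x < (((w x).toReal + b / 4 : ℝ) : EReal) := by
    rw [← EReal.coe_toReal (hw.ne_top x hx) hwx, EReal.toReal_coe, EReal.coe_lt_coe_iff]
    linarith
  filter_upwards [self_mem_nhdsWithin, hw.eventually_ae_toReal_le_s9 hU hx hlt,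
    nhdsWithin_le_nhds (eventually_closedBall_subset (hU.mem_nhds hx))] with r hr hle hsub
  have hc : 0 < volume.real (ball x r) :=
    ENNReal.toReal_pos (measure_ball_pos volume x hr).ne' measure_ball_lt_top.ne
  rw [div_lt_iff₀ hc]
  calc ∫ y in ball x r, |(w y).toReal - (w x).toReal|
      ≤ 2 * (b / 4) * volume.real (ball x r) :=
        setIntegral_abs_sub_le_of_mul_le_setIntegral measure_ball_lt_top.ne
          (hw.integrableOn_ball hsub) (by positivity)
          (hw.toReal_mul_le_setIntegral_ball hx hwx hr hsub) hle
    _ < b * volume.real (ball x r) := by nlinarith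

end IsPSH

theorem stmt9_general (k m : ℕ) (x0 : Ck k) (hx0 : x0 ∈ ball (0 : Ck k) 1)
    (v : Fin m → Ck k → ℝ)
    (hv : ∀ j, IsPSH (ball (0 : Ck k) 1) (fun x => ((v j x : ℝ) : EReal)))
    (δ : ℝ) (hδ : 0 < δ)
    (u : Ck k → EReal) (hu : IsPSH (ball (0 : Ck k) 1) u)
    (hufin : u x0 ≠ ⊥) :
    Tendsto (fun r : ℝ =>
        (∫ y in ball x0 r \ {x | ∀ j, |v j x - v j x0| < δ},
          |(u y).toReal| ∂volume) / (volume (ball x0 r)).toReal)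
      (𝓝[>] 0) (𝓝 0) := by
  set a := (u x0).toReal
  set osc : (Ck k → ℝ) → ℝ → ℝ := fun f r =>
    (∫ y in ball x0 r, |f y - f x0|) / volume.real (ball x0 r)
  have hu_osc : Tendsto (osc fun y => (u y).toReal) (𝓝[>] 0) (𝓝 0) :=
    hu.tendsto_setIntegral_abs_sub_div isOpen_ball hx0 hufin
  have hv_osc : ∀ j, Tendsto (osc (v j)) (𝓝[>] 0) (𝓝 0) := fun j => by
    simpa using (hv j).tendsto_setIntegral_abs_sub_div isOpen_ball hx0 (EReal.coe_ne_bot _)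
  have hbound : Tendsto (fun r => osc (fun y => (u y).toReal) r + |a| * (δ⁻¹ * ∑ j, osc (v j) r))
      (𝓝[>] 0) (𝓝 0) := by
    simpa using hu_osc.add
      (((tendsto_finsetSum Finset.univ fun j _ => hv_osc j).const_mul δ⁻¹).const_mul |a|)
  refine squeeze_zero' (Eventually.of_forall fun r => by positivity) ?_ hbound
  filter_upwards [nhdsWithin_le_nhds (eventually_closedBall_subset (isOpen_ball.mem_nhds hx0))]
    with r hr
  have hμ : volume (ball x0 r) ≠ ∞ := measure_ball_lt_top.ne
  have hv_int : ∀ j, IntegrableOn (fun y => v j y - v j x0) (ball x0 r) := fun j => by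
    have h := ((hv j).integrableOn_ball hr).sub (integrableOn_const hμ (C := v j x0))
    simp only [EReal.toReal_coe] at h
    exact h
  have hbad := measureReal_diff_setOf_forall_abs_lt_le measurableSet_ball hμ hv_int hδ
  have hgood := setIntegral_abs_le_setIntegral_abs_sub_add
    (Set.sdiff_subset : ball x0 r \ {x | ∀ j, |v j x - v j x0| < δ} ⊆ _) hμ
    (hu.integrableOn_ball hr) a
  calc _ ≤ ((∫ y in ball x0 r, |(u y).toReal - a|) +
        |a| * (δ⁻¹ * ∑ j, ∫ y in ball x0 r, |v j y - v j x0|)) / volume.real (ball x0 r) :=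
        div_le_div_of_nonneg_right (hgood.trans (by gcongr)) measureReal_nonneg
    _ = _ := by rw [add_div, mul_div_assoc, mul_div_assoc, Finset.sum_div]

/-- for bounded psh `u₁,…,u_m` on the unit ball and
`V = ⋂ⱼ {|uⱼ - uⱼ(x₀)| < δ}` (a plurifine neighborhood of `x₀`), and `u` psh, `u ≤ 0`,
`u(x₀) > -∞`, one has `c_r⁻¹ ∫_{B(x₀,r) \ V} |u| dLeb → 0` as `r → 0⁺`. -/
theorem stmt9 (k m : ℕ) (x0 : Ck k) (hx0 : x0 ∈ ball (0 : Ck k) 1)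
    (v : Fin m → Ck k → ℝ)
    (hv : ∀ j, IsPSH (ball (0 : Ck k) 1) (fun x => ((v j x : ℝ) : EReal)))
    (hvbd : ∀ j, ∃ C : ℝ, ∀ x ∈ ball (0 : Ck k) 1, |v j x| ≤ C)
    (δ : ℝ) (hδ : 0 < δ)
    (u : Ck k → EReal) (hu : IsPSH (ball (0 : Ck k) 1) u)
    (huneg : ∀ x ∈ ball (0 : Ck k) 1, u x ≤ 0) (hufin : u x0 ≠ ⊥) :
    Tendsto (fun r : ℝ =>
        (∫ y in ball x0 r \ {x | ∀ j, |v j x - v j x0| < δ},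
          |(u y).toReal| ∂volume) / (volume (ball x0 r)).toReal)
      (𝓝[>] 0) (𝓝 0) :=
  stmt9_general k m x0 hx0 v hv δ hδ u hu hufin
end
end

section
/- With $V=\bigcap_{j=1}^m\{x:|u_j(x)-u_j(x_0)|<\delta\}$ as above and $u$ plurisubharmonic on $\mathbb{B}$ with $u(x_0)>-\infty$, one has $c_r^{-1}\int_{B(x_0,r)\cap V}|u-u(x_0)|\,d\mathrm{Leb}\to 0$ as $r\to 0$, where $c_r=\mathrm{Leb}(B(x_0,r))$. -/
open MeasureTheory Metric Filter
open scoped ENNReal Topology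

noncomputable section

/-!
By upper semicontinuity, `u ≤ u(x₀) + η` on small balls around `x₀`, so the positive part of
`u - u(x₀)` has average at most `η` there. The sub-mean value inequality says that `u - u(x₀)`
has nonnegative average on these balls, so its negative part has average at most `η` as well.
Hence the average of `|u - u(x₀)|` over `B(x₀, r)` tends to `0`; cutting the domain of
integration down to `B(x₀, r) ∩ V` only decreases the integral.
-/

open Set

theorem addHaar_closedBall_eq_addHaar_ball_of_ne_zero {E : Type*} [NormedAddCommGroup E]
    [NormedSpace ℝ E] [MeasurableSpace E] [BorelSpace E] [FiniteDimensional ℝ E]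
    (μ : Measure E) [μ.IsAddHaarMeasure] (x : E) {r : ℝ} (hr : r ≠ 0) :
    μ (closedBall x r) = μ (ball x r) := by
  rw [← closedBall_sdiff_sphere, measure_sdiff_null (Measure.addHaar_sphere_of_ne_zero μ x hr)]

theorem integral_abs_sub_le_of_le_average {α : Type*} [MeasurableSpace α] {μ : Measure α}
    [IsFiniteMeasure μ] {f : α → ℝ} {a η : ℝ} (hf : Integrable f μ) (hη : 0 ≤ η)
    (hmean : a ≤ ⨍ x, f x ∂μ) (hle : ∀ᵐ x ∂μ, f x ≤ a + η) :
    ∫ x, |f x - a| ∂μ ≤ 2 * η * μ.real univ := by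
  have hneg_int : Integrable (fun x => a - f x) μ := (integrable_const a).sub hf
  have hpos : Integrable (fun x => max (f x - a) 0) μ :=
    (hf.sub (integrable_const a)).sup (integrable_const 0)
  -- `|t| = -t + 2 max t 0` splits `|f - a|` into a part controlled by the mean and one by `hle`
  have hsplit : ∀ x, |f x - a| = (a - f x) + 2 * max (f x - a) 0 := fun x => by
    rcases le_total (f x) a with h | h
    · rw [abs_of_nonpos (by linarith), max_eq_right (by linarith)]; ring
    · rw [abs_of_nonneg (by linarith), max_eq_left (by linarith)]; ring
  have hneg : ∫ x, (a - f x) ∂μ ≤ 0 := by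
    have hsmul := measure_smul_average μ f
    rw [smul_eq_mul] at hsmul
    rw [integral_sub (integrable_const a) hf, integral_const, smul_eq_mul, ← hsmul, sub_nonpos]
    exact mul_le_mul_of_nonneg_left hmean measureReal_nonneg
  have hposle : ∫ x, max (f x - a) 0 ∂μ ≤ η * μ.real univ := by
    calc ∫ x, max (f x - a) 0 ∂μ ≤ ∫ _, η ∂μ :=
          integral_mono_ae hpos (integrable_const η)
            (hle.mono fun x hx => max_le (by linarith) hη)
      _ = η * μ.real univ := by rw [integral_const, smul_eq_mul, mul_comm]
  simp_rw [hsplit]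
  rw [integral_add hneg_int (hpos.const_mul 2), integral_const_mul]
  linarith

namespace IsPSH

variable {k : ℕ} {U : Set (Ck k)} {u : Ck k → EReal}

theorem ae_ne_bot (hu : IsPSH U u) : ∀ᵐ y ∂volume, y ∈ U → u y ≠ ⊥ := by
  rw [ae_iff]
  simpa using hu.bot_null

theorem integral_closedBall_abs_sub_le (hu : IsPSH U u) {x : Ck k} (hxbot : u x ≠ ⊥)
    {r η : ℝ} (hr : 0 < r) (hη : 0 ≤ η) (hrU : closedBall x r ⊆ U)
    (hle : ∀ y ∈ closedBall x r, u y ≤ ((u x).toReal + η : ℝ)) :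
    ∫ y in closedBall x r, |(u y).toReal - (u x).toReal| ≤
      2 * η * volume.real (closedBall x r) := by
  have hxU : x ∈ U := hrU (mem_closedBall_self hr.le)
  have hux : u x = ((u x).toReal : EReal) := (EReal.coe_toReal (hu.ne_top x hxU) hxbot).symm
  have hmean : (u x).toReal ≤ ⨍ y in closedBall x r, (u y).toReal := by
    have hsub := hu.submean x hxU r hr hrU
    rw [hux] at hsub
    exact_mod_cast hsub
  have hle' : ∀ᵐ y ∂volume.restrict (closedBall x r), (u y).toReal ≤ (u x).toReal + η := by
    filter_upwards [ae_restrict_mem measurableSet_closedBall, ae_restrict_of_ae hu.ae_ne_bot]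
      with y hy hybot
    exact (EReal.toReal_le_toReal (hle y hy) (hybot (hrU hy)) (EReal.coe_ne_top _)).trans_eq
      (EReal.toReal_coe _)
  have : IsFiniteMeasure (volume.restrict (closedBall x r)) :=
    isFiniteMeasure_restrict.2 measure_closedBall_lt_top.ne
  simpa [measureReal_restrict_apply_univ] using integral_abs_sub_le_of_le_average
    (hu.loc_int.integrableOn_compact_subset hrU (isCompact_closedBall x r)) hη hmean hle'

theorem eventually_closedBall_subset_and_le (hu : IsPSH U u) (hU : IsOpen U) {x : Ck k}
    (hxU : x ∈ U) (hxbot : u x ≠ ⊥) {η : ℝ} (hη : 0 < η) :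
    ∀ᶠ r in 𝓝[>] 0,
      closedBall x r ⊆ U ∧ ∀ y ∈ closedBall x r, u y ≤ ((u x).toReal + η : ℝ) := by
  have hux : u x < ((u x).toReal + η : ℝ) := by
    rw [← EReal.coe_toReal (hu.ne_top x hxU) hxbot]
    exact_mod_cast lt_add_of_pos_right _ hη
  have hnear : ∀ᶠ y in 𝓝 x, y ∈ U ∧ u y ≤ ((u x).toReal + η : ℝ) := by
    have husc := hu.usc x hxU _ hux
    rw [hU.nhdsWithin_eq hxU] at husc
    exact (hU.eventually_mem hxU).and (husc.mono fun _ => le_of_lt)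
  exact (((tendsto_closedBall_smallSets x).mono_left nhdsWithin_le_nhds).eventually
    (eventually_smallSets_forall.2 hnear)).mono fun _ => forall₂_and.1

theorem tendsto_setIntegral_abs_sub_div_volume_ball (hu : IsPSH U u) (hU : IsOpen U)
    {x : Ck k} (hxU : x ∈ U) (hxbot : u x ≠ ⊥) {s : ℝ → Set (Ck k)}
    (hs : ∀ r, s r ⊆ ball x r) :
    Tendsto (fun r => (∫ y in s r, |(u y).toReal - (u x).toReal|) / volume.real (ball x r))
      (𝓝[>] 0) (𝓝 0) := by
  refine tendsto_order.2 ⟨fun ε hε => Eventually.of_forall fun r => hε.trans_le ?_,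
    fun ε hε => ?_⟩
  · exact div_nonneg (integral_nonneg fun _ => abs_nonneg _) measureReal_nonneg
  filter_upwards [hu.eventually_closedBall_subset_and_le hU hxU hxbot (by positivity : 0 < ε / 4),
    self_mem_nhdsWithin] with r ⟨hrU, hle⟩ (hr : 0 < r)
  have hvol : volume.real (closedBall x r) = volume.real (ball x r) := by
    rw [measureReal_def, measureReal_def,
      addHaar_closedBall_eq_addHaar_ball_of_ne_zero volume x hr.ne']
  have hint : ∫ y in s r, |(u y).toReal - (u x).toReal| ≤
      2 * (ε / 4) * volume.real (ball x r) := by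
    calc ∫ y in s r, |(u y).toReal - (u x).toReal|
        ≤ ∫ y in closedBall x r, |(u y).toReal - (u x).toReal| :=
          setIntegral_mono_set
            ((hu.loc_int.integrableOn_compact_subset hrU (isCompact_closedBall x r)).sub
              (integrableOn_const measure_closedBall_lt_top.ne)).abs
            (Eventually.of_forall fun _ => abs_nonneg _)
            ((hs r).trans ball_subset_closedBall).eventuallyLE
      _ ≤ 2 * (ε / 4) * volume.real (ball x r) :=
          hvol ▸ hu.integral_closedBall_abs_sub_le hxbot hr (by positivity) hrU hle
  calc _ ≤ 2 * (ε / 4) := div_le_of_le_mul₀ measureReal_nonneg (by positivity) hint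
    _ < ε := by linarith

end IsPSH

theorem stmt10_general (k m : ℕ) (x0 : Ck k) (hx0 : x0 ∈ ball (0 : Ck k) 1)
    (v : Fin m → Ck k → ℝ)
    (δ : ℝ)
    (u : Ck k → EReal) (hu : IsPSH (ball (0 : Ck k) 1) u)
    (hufin : u x0 ≠ ⊥) :
    Tendsto (fun r : ℝ =>
        (∫ y in ball x0 r ∩ {x | ∀ j, |v j x - v j x0| < δ},
          |(u y).toReal - (u x0).toReal| ∂volume) / (volume (ball x0 r)).toReal)
      (𝓝[>] 0) (𝓝 0) :=
  hu.tendsto_setIntegral_abs_sub_div_volume_ball isOpen_ball hx0 hufin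
    fun _ => inter_subset_left

/-- for bounded psh `u₁,…,u_m` on the unit ball and
`V = ⋂ⱼ {|uⱼ - uⱼ(x₀)| < δ}`, and `u` psh with `u(x₀) > -∞`, one has
`c_r⁻¹ ∫_{B(x₀,r) ∩ V} |u - u(x₀)| dLeb → 0` as `r → 0⁺` (`x₀` is a plurifine Lebesgue
point of `u`). -/
theorem stmt10 (k m : ℕ) (x0 : Ck k) (hx0 : x0 ∈ ball (0 : Ck k) 1)
    (v : Fin m → Ck k → ℝ)
    (hv : ∀ j, IsPSH (ball (0 : Ck k) 1) (fun x => ((v j x : ℝ) : EReal)))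
    (hvbd : ∀ j, ∃ C : ℝ, ∀ x ∈ ball (0 : Ck k) 1, |v j x| ≤ C)
    (δ : ℝ) (hδ : 0 < δ)
    (u : Ck k → EReal) (hu : IsPSH (ball (0 : Ck k) 1) u)
    (hufin : u x0 ≠ ⊥) :
    Tendsto (fun r : ℝ =>
        (∫ y in ball x0 r ∩ {x | ∀ j, |v j x - v j x0| < δ},
          |(u y).toReal - (u x0).toReal| ∂volume) / (volume (ball x0 r)).toReal)
      (𝓝[>] 0) (𝓝 0) :=
  stmt10_general k m x0 hx0 v δ u hu hufin
end
end
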